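/- arXiv:2605.31583 — 5 statements merged into one kernel-verified Lean document; each statement's English description precedes it below -/
import Mathlib

section
/- There is an absolute constant C < ∞ such that for every nonnegative integer k and positive integers n, N with k ≤ n ≤ N/3: C(n,k)·C(N−n, n−k) / C(N,n) ≤ (C·n / (√(k ∨ 1) · ((n−k) ∨ 1))) · exp( k·log(n²/(N·k)) − 2N·h((N−n)/N) + 2n·h((n−k)/n) + N·h((N−2n+k)/N) ), where the term k·log(n²/(N·k)) is interpreted as 0 when k = 0. -/
/-!
Stirling's formula with explicit constants, `√m (m/e)^m ≤ m! ≤ e √m (m/e)^m`, approximates each of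
the three binomial coefficients up to a factor `e` or `e²` by `√(j+i)/(√j √i) · (j+i)^(j+i)/(j^j i^i)`.
Writing `b = n - k`, `c = N - n`, `d = N - 2n + k`, the exponential in the bound is exactly the
quotient of the three main terms `(j+i)^(j+i)/(j^j i^i)`, and the square-root prefactors combine to
`n c / (√k b √(d N))`. Since `n ≤ N/3` forces `b ≤ d`, we have `c ≤ 2d ≤ 2√(d N)`.
-/

open Real

noncomputable section

/-- The entropy-type function h(x) = x log(1/x) (with h(0) = 0, using `Real.log 0 = 0`). -/
def hfun (x : ℝ) : ℝ := x * Real.log (1 / x)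

open scoped Nat

/-- `√m (m/e)^m`, with `√m` replaced by `√(max m 1)` so that both Stirling bounds also hold at
`m = 0`. -/
def stirlingApprox (m : ℕ) : ℝ := √(max (m : ℝ) 1) * (m / exp 1) ^ m

theorem stirlingApprox_pos (m : ℕ) : 0 < stirlingApprox m := by
  unfold stirlingApprox
  rcases m.eq_zero_or_pos with rfl | hm
  · simp
  · positivity

theorem stirlingApprox_le_factorial (m : ℕ) : stirlingApprox m ≤ m ! := by
  rcases m.eq_zero_or_pos with rfl | hm
  · simp [stirlingApprox]
  refine le_trans ?_ (Stirling.le_factorial_stirling m)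
  have hm1 : (1 : ℝ) ≤ m := by exact_mod_cast hm
  rw [stirlingApprox, max_eq_left hm1]
  gcongr
  nlinarith [pi_gt_three]

theorem factorial_le_exp_one_mul_stirlingApprox (m : ℕ) :
    (m ! : ℝ) ≤ exp 1 * stirlingApprox m := by
  rcases m.eq_zero_or_pos with rfl | hm
  · simp [stirlingApprox]
  have hseq : Stirling.stirlingSeq m ≤ exp 1 / √2 := by
    obtain ⟨m, rfl⟩ := Nat.exists_eq_add_of_lt hm
    simpa [Stirling.stirlingSeq_one] using Stirling.stirlingSeq'_antitone (Nat.zero_le m)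
  have hm1 : (1 : ℝ) ≤ m := by exact_mod_cast hm
  rw [Stirling.stirlingSeq, div_le_iff₀ (by positivity)] at hseq
  rw [stirlingApprox, max_eq_left hm1]
  refine hseq.trans_eq ?_
  rw [sqrt_mul zero_le_two]
  field_simp

def binomApprox (j i : ℕ) : ℝ := stirlingApprox (j + i) / (stirlingApprox j * stirlingApprox i)

theorem binomApprox_pos (j i : ℕ) : 0 < binomApprox j i := by
  have := stirlingApprox_pos
  exact div_pos (this _) (mul_pos (this j) (this i))

theorem add_choose_le_exp_one_mul_binomApprox (j i : ℕ) :
    ((j + i).choose j : ℝ) ≤ exp 1 * binomApprox j i := by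
  have hS := stirlingApprox_pos
  rw [Nat.cast_add_choose, binomApprox, mul_div_assoc']
  exact div_le_div₀ (mul_pos (exp_pos 1) (hS _)).le (factorial_le_exp_one_mul_stirlingApprox _)
    (mul_pos (hS j) (hS i))
    (mul_le_mul (stirlingApprox_le_factorial j) (stirlingApprox_le_factorial i) (hS i).le
      (by positivity))

theorem binomApprox_div_exp_one_sq_le_add_choose (j i : ℕ) :
    binomApprox j i / exp 1 ^ 2 ≤ (j + i).choose j := by
  have hS := stirlingApprox_pos
  calc binomApprox j i / exp 1 ^ 2
      = stirlingApprox (j + i) / ((exp 1 * stirlingApprox j) * (exp 1 * stirlingApprox i)) := by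
        rw [binomApprox]; ring
    _ ≤ (j + i)! / (j ! * i !) :=
        div_le_div₀ (by positivity) (stirlingApprox_le_factorial _) (by positivity)
          (mul_le_mul (factorial_le_exp_one_mul_stirlingApprox j)
            (factorial_le_exp_one_mul_stirlingApprox i) (by positivity)
            (mul_pos (exp_pos 1) (hS j)).le)
    _ = (j + i).choose j := (Nat.cast_add_choose ℝ).symm

theorem natCast_pow_self_pos (m : ℕ) : 0 < (m : ℝ) ^ m := by
  exact_mod_cast Nat.pow_self_pos

def binomMainTerm (j i : ℕ) : ℝ := ((j + i : ℕ) : ℝ) ^ (j + i) / ((j : ℝ) ^ j * (i : ℝ) ^ i)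

theorem binomMainTerm_pos (j i : ℕ) : 0 < binomMainTerm j i :=
  div_pos (natCast_pow_self_pos _) (mul_pos (natCast_pow_self_pos j) (natCast_pow_self_pos i))

theorem binomApprox_eq (j i : ℕ) :
    binomApprox j i = √(max ((j + i : ℕ) : ℝ) 1) / (√(max (j : ℝ) 1) * √(max (i : ℝ) 1)) *
      binomMainTerm j i := by
  have hj := natCast_pow_self_pos j
  have hi := natCast_pow_self_pos i
  simp only [binomApprox, stirlingApprox, binomMainTerm, div_pow, pow_add (exp 1)]
  field_simp

theorem exp_mul_hfun_div (x : ℝ) (j : ℕ) (hx : 0 < x) :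
    exp (x * hfun (j / x)) = (x / j) ^ j := by
  rcases j.eq_zero_or_pos with rfl | hj
  · simp [hfun]
  have hj' : (0 : ℝ) < j := by exact_mod_cast hj
  rw [hfun, one_div_div, ← mul_assoc, mul_div_cancel₀ _ hx.ne', exp_nat_mul,
    exp_log (by positivity)]

section
variable {k b c d n N : ℕ}

theorem exp_exponent_eq_binomMainTerm (hn : n = k + b) (hc : c = b + d) (hN : N = n + c)
    (hn0 : 0 < n) :
    exp (k * log ((n : ℝ) ^ 2 / (N * k)) - 2 * N * hfun (c / N) + 2 * n * hfun (b / n)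
      + N * hfun (d / N)) = binomMainTerm k b * binomMainTerm b d / binomMainTerm n c := by
  have hn0' : (0 : ℝ) < n := by exact_mod_cast hn0
  have hN0 : (0 : ℝ) < N := by exact_mod_cast (by omega : 0 < N)
  have hlog : exp (k * log ((n : ℝ) ^ 2 / (N * k))) = (n : ℝ) ^ (2 * k) / (N ^ k * k ^ k) := by
    rcases k.eq_zero_or_pos with rfl | hk
    · simp
    have hk' : (0 : ℝ) < k := by exact_mod_cast hk
    rw [exp_nat_mul, exp_log (by positivity), div_pow, mul_pow, pow_mul]
  rw [show ∀ x y z w : ℝ, x - 2 * N * y + 2 * n * z + N * w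
      = x + (n * z + n * z) + N * w - (N * y + N * y) from fun _ _ _ _ => by ring,
    exp_sub, exp_add, exp_add, exp_add, exp_add, hlog, exp_mul_hfun_div _ _ hn0',
    exp_mul_hfun_div _ _ hN0, exp_mul_hfun_div _ _ hN0]
  have := natCast_pow_self_pos k
  have := natCast_pow_self_pos b
  have := natCast_pow_self_pos c
  have := natCast_pow_self_pos d
  subst hn hc hN
  simp only [binomMainTerm, div_pow]
  push_cast at *
  field_simp
  ring

theorem max_one_le_two_mul_sqrt_max_one_mul (hcd : c ≤ 2 * d) (hdN : d ≤ N) :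
    max (c : ℝ) 1 ≤ 2 * (√(max (d : ℝ) 1) * √(max (N : ℝ) 1)) := by
  have hd : √(max (d : ℝ) 1) * √(max (d : ℝ) 1) = max (d : ℝ) 1 :=
    mul_self_sqrt (zero_le_one.trans (le_max_right _ _))
  have hdN' : √(max (d : ℝ) 1) ≤ √(max (N : ℝ) 1) := by gcongr
  have hcd' : max (c : ℝ) 1 ≤ 2 * max (d : ℝ) 1 := by
    refine max_le ?_ (by linarith [le_max_right (d : ℝ) 1])
    have : (c : ℝ) ≤ 2 * d := by exact_mod_cast hcd
    linarith [le_max_left (d : ℝ) 1]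
  nlinarith [sqrt_nonneg (max (d : ℝ) 1)]

theorem binomApprox_ratio_le (hn : n = k + b) (hc : c = b + d) (hN : N = n + c) (hn0 : 0 < n)
    (hbd : b ≤ d) :
    binomApprox k b * binomApprox b d / binomApprox n c ≤
      2 * n / (√(max (k : ℝ) 1) * max (b : ℝ) 1) *
        (binomMainTerm k b * binomMainTerm b d / binomMainTerm n c) := by
  have hr (m : ℕ) : 0 < √(max (m : ℝ) 1) := sqrt_pos.2 (lt_max_of_lt_right one_pos)
  have hr2 (m : ℕ) : √(max (m : ℝ) 1) * √(max (m : ℝ) 1) = max (m : ℝ) 1 :=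
    mul_self_sqrt (zero_le_one.trans (le_max_right _ _))
  have hM := binomMainTerm_pos
  have hn1 : max (n : ℝ) 1 = n := max_eq_left (by exact_mod_cast hn0)
  have hc2 := max_one_le_two_mul_sqrt_max_one_mul (c := c) (by omega) (by omega : d ≤ N)
  rw [binomApprox_eq, binomApprox_eq, binomApprox_eq, ← hn, ← hc, ← hN]
  have := hr k; have := hr b; have := hr c; have := hr d; have := hr n; have := hr N
  have := hM n c
  calc _ = √(max (n : ℝ) 1) * √(max (n : ℝ) 1) * (√(max (c : ℝ) 1) * √(max (c : ℝ) 1)) /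
          (√(max (k : ℝ) 1) * (√(max (b : ℝ) 1) * √(max (b : ℝ) 1)) *
            (√(max (d : ℝ) 1) * √(max (N : ℝ) 1))) *
        (binomMainTerm k b * binomMainTerm b d / binomMainTerm n c) := by
        field_simp
    _ = n * max (c : ℝ) 1 / (√(max (k : ℝ) 1) * max (b : ℝ) 1 *
          (√(max (d : ℝ) 1) * √(max (N : ℝ) 1))) *
        (binomMainTerm k b * binomMainTerm b d / binomMainTerm n c) := by
        rw [hr2, hr2, hr2, hn1]
    _ ≤ _ := by
      refine mul_le_mul_of_nonneg_right ?_ (div_pos (mul_pos (hM k b) (hM b d)) (hM n c)).le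
      calc _ ≤ n * (2 * (√(max (d : ℝ) 1) * √(max (N : ℝ) 1))) /
            (√(max (k : ℝ) 1) * max (b : ℝ) 1 * (√(max (d : ℝ) 1) * √(max (N : ℝ) 1))) := by
            gcongr
        _ = _ := by field_simp

theorem choose_mul_choose_div_choose_le (hn : n = k + b) (hc : c = b + d) (hN : N = n + c) :
    (n.choose k * c.choose b : ℝ) / N.choose n ≤
      exp 1 ^ 4 * (binomApprox k b * binomApprox b d / binomApprox n c) := by
  subst hn hc hN
  have hB := binomApprox_pos
  calc _ ≤ (exp 1 * binomApprox k b) * (exp 1 * binomApprox b d) /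
          (binomApprox (k + b) (b + d) / exp 1 ^ 2) :=
        div_le_div₀ (by have := hB k b; have := hB b d; positivity)
          (mul_le_mul (add_choose_le_exp_one_mul_binomApprox k b)
            (add_choose_le_exp_one_mul_binomApprox b d) (Nat.cast_nonneg _)
            (mul_pos (exp_pos 1) (hB k b)).le)
          (div_pos (hB _ _) (by positivity)) (binomApprox_div_exp_one_sq_le_add_choose _ _)
    _ = _ := by
      have := hB (k + b) (b + d)
      field_simp
end

/-- **Asymptotics of binomial coefficients (full form).**  There is an absolute constant
C < ∞ such that for all integers 0 ≤ k ≤ n ≤ N/3 (n, N positive),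
`C(n,k) C(N−n,n−k) / C(N,n)` is at most
`(C n / (√(k∨1) ((n−k)∨1))) exp(k log(n²/(Nk)) − 2N h((N−n)/N) + 2n h((n−k)/n) + N h((N−2n+k)/N))`,
where `k log(n²/(Nk))` is interpreted as 0 for k = 0. -/
theorem binom_asymptotics_full :
    ∃ C : ℝ, 0 < C ∧ ∀ k n N : ℕ, 0 < n → 0 < N → k ≤ n → 3 * n ≤ N →
      ((n.choose k : ℝ) * ((N - n).choose (n - k) : ℝ)) / (N.choose n : ℝ) ≤
        C * n / (Real.sqrt (max (k : ℝ) 1) * max ((n : ℝ) - k) 1) *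
          Real.exp ((k : ℝ) * Real.log ((n : ℝ) ^ 2 / (N * k))
            - 2 * N * hfun (((N : ℝ) - n) / N)
            + 2 * n * hfun (((n : ℝ) - k) / n)
            + N * hfun (((N : ℝ) - 2 * n + k) / N)) := by
  refine ⟨2 * exp 1 ^ 4, by positivity, fun k n N hn _ hkn h3n => ?_⟩
  obtain ⟨b, hnb⟩ := Nat.exists_eq_add_of_le hkn
  obtain ⟨c, hNc⟩ := Nat.exists_eq_add_of_le (by omega : n ≤ N)
  obtain ⟨d, hcd⟩ := Nat.exists_eq_add_of_le (by omega : b ≤ c)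
  have hnb' : (n : ℝ) = k + b := by exact_mod_cast hnb
  have hNc' : (N : ℝ) = n + c := by exact_mod_cast hNc
  have hcd' : (c : ℝ) = b + d := by exact_mod_cast hcd
  rw [show N - n = c by omega, show n - k = b by omega, show (n : ℝ) - k = b by linarith,
    show (N : ℝ) - n = c by linarith, show (N : ℝ) - 2 * n + k = d by linarith,
    exp_exponent_eq_binomMainTerm hnb hcd hNc hn]
  calc _ ≤ exp 1 ^ 4 * (binomApprox k b * binomApprox b d / binomApprox n c) :=
        choose_mul_choose_div_choose_le hnb hcd hNc
    _ ≤ exp 1 ^ 4 * (2 * n / (√(max (k : ℝ) 1) * max (b : ℝ) 1) *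
          (binomMainTerm k b * binomMainTerm b d / binomMainTerm n c)) := by
        gcongr
        exact binomApprox_ratio_le hnb hcd hNc hn (by omega)
    _ = _ := by ring

end
end

section
/- There is an absolute constant C < ∞ such that for every nonnegative integer k and positive integers n, N with k ≤ n ≤ N/3 and N ≥ n^{3/2}: C(n,k)·C(N−n, n−k) / C(N,n) ≤ (C·n / (√(k ∨ 1) · ((n−k) ∨ 1))) · exp( k·log(e·n²/(N·k)) − n²/N + 2kn/N ), where the term k·log(e·n²/(N·k)) is interpreted as 0 when k = 0. -/
/-!
With `D = N - 2n`: `C(n,k) k! ≤ n^k`; going down from `C(N-n, n)` to `C(N-n, n-k)` each step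
multiplies by `j / (N - n - j + 1) ≤ n / D`; and comparing descending factorials factor by factor,
`C(N-n, n) ≤ C(N,n) (1 - n/N)^n ≤ C(N,n) e^{-n²/N}`. Hence the ratio is at most
`n^{2k} e^{-n²/N} / (k! D^k)`. Stirling's bound `k! ≥ √k (k/e)^k` turns `n^{2k} / (k! D^k)` into
`(e n² / (N k))^k (N/D)^k / √k`, and with `x = 2n/N ≤ 2/3`,
`N/D = (1 - x)⁻¹ ≤ exp (x + 3x²)`, where the quadratic term costs at most `exp (12 k n²/N²) ≤ e^{12}`
since `k n² ≤ n³ ≤ N²`.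
-/

open Real
open scoped Nat

noncomputable section

theorem Nat.choose_sub_mul_pow_le {M n D : ℕ} (hD : D + n ≤ M + 1) :
    ∀ {k}, k ≤ n → M.choose (n - k) * D ^ k ≤ M.choose n * n ^ k
  | 0, _ => by simp
  | k + 1, hk => by
    have hstep : M.choose (n - (k + 1)) * D ≤ M.choose (n - k) * n := by
      have hpascal := Nat.choose_succ_right_eq M (n - (k + 1))
      rw [show n - (k + 1) + 1 = n - k by omega] at hpascal
      calc M.choose (n - (k + 1)) * D ≤ M.choose (n - (k + 1)) * (M - (n - (k + 1))) :=
            Nat.mul_le_mul_left _ (by omega)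
        _ = M.choose (n - k) * (n - k) := by rw [← hpascal]
        _ ≤ M.choose (n - k) * n := Nat.mul_le_mul_left _ (Nat.sub_le _ _)
    calc M.choose (n - (k + 1)) * D ^ (k + 1) = M.choose (n - (k + 1)) * D * D ^ k := by ring
      _ ≤ M.choose (n - k) * n * D ^ k := Nat.mul_le_mul_right _ hstep
      _ = M.choose (n - k) * D ^ k * n := by ring
      _ ≤ M.choose n * n ^ k * n :=
          Nat.mul_le_mul_right _ (Nat.choose_sub_mul_pow_le hD (by omega))
      _ = M.choose n * n ^ (k + 1) := by ring

theorem Nat.sub_descFactorial_mul_pow_le (N m : ℕ) :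
    ∀ n, (N - m).descFactorial n * N ^ n ≤ N.descFactorial n * (N - m) ^ n
  | 0 => by simp
  | i + 1 => by
    have hfactor : (N - m - i) * N ≤ (N - i) * (N - m) := by
      rcases le_or_gt (m + i) N with h | h
      · obtain ⟨a, rfl⟩ := Nat.exists_eq_add_of_le' h
        rw [show a + (m + i) - m - i = a by omega, show a + (m + i) - i = a + m by omega,
          show a + (m + i) - m = a + i by omega]
        nlinarith
      · simp [show N - m - i = 0 by omega]
    rw [Nat.descFactorial_succ, Nat.descFactorial_succ]
    calc (N - m - i) * (N - m).descFactorial i * N ^ (i + 1)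
        = ((N - m - i) * N) * ((N - m).descFactorial i * N ^ i) := by ring
      _ ≤ ((N - i) * (N - m)) * (N.descFactorial i * (N - m) ^ i) :=
          Nat.mul_le_mul hfactor (Nat.sub_descFactorial_mul_pow_le N m i)
      _ = (N - i) * N.descFactorial i * (N - m) ^ (i + 1) := by ring

theorem Nat.sub_choose_mul_pow_le (N m n : ℕ) :
    (N - m).choose n * N ^ n ≤ N.choose n * (N - m) ^ n := by
  have h := Nat.sub_descFactorial_mul_pow_le N m n
  rw [Nat.descFactorial_eq_factorial_mul_choose, Nat.descFactorial_eq_factorial_mul_choose,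
    mul_assoc, mul_assoc] at h
  exact Nat.le_of_mul_le_mul_left h n.factorial_pos

theorem Nat.sub_choose_le_choose_mul_exp {N m : ℕ} (hm : m ≤ N) (n : ℕ) :
    ((N - m).choose n : ℝ) ≤ N.choose n * exp (-(m * n / N)) := by
  rcases N.eq_zero_or_pos with rfl | hN
  · obtain rfl : m = 0 := by omega
    simp
  have hNR : (0 : ℝ) < N := by exact_mod_cast hN
  have hcast : ((N - m).choose n : ℝ) * (N : ℝ) ^ n ≤ N.choose n * ((N : ℝ) - m) ^ n := by
    rw [← Nat.cast_sub hm]; exact_mod_cast Nat.sub_choose_mul_pow_le N m n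
  have hbase : ((N : ℝ) - m) / N ≤ exp (-(m / N)) := by
    rw [sub_div, div_self hNR.ne']; exact one_sub_le_exp_neg _
  calc ((N - m).choose n : ℝ) ≤ N.choose n * (((N : ℝ) - m) / N) ^ n := by
        rw [div_pow, mul_div_assoc', le_div_iff₀ (by positivity)]; exact hcast
    _ ≤ N.choose n * exp (-(m / N)) ^ n := by
        gcongr
        exact div_nonneg (by simp [hm]) hNR.le
    _ = N.choose n * exp (-(m * n / N)) := by rw [← exp_nat_mul]; ring_nf

theorem Nat.sqrt_max_one_mul_div_exp_pow_le_factorial (k : ℕ) :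
    √(max (k : ℝ) 1) * (k / exp 1) ^ k ≤ k ! := by
  rcases k.eq_zero_or_pos with rfl | hk
  · simp
  refine le_trans ?_ (Stirling.le_factorial_stirling k)
  gcongr
  rw [max_eq_left (by exact_mod_cast hk)]
  nlinarith [pi_gt_three, (Nat.cast_nonneg k : (0 : ℝ) ≤ k)]

theorem Nat.choose_mul_choose_sub_div_choose_le {k n N : ℕ} (hkn : k ≤ n) (hnN : 2 * n < N) :
    (n.choose k * (N - n).choose (n - k) : ℝ) / N.choose n ≤
      n ^ (2 * k) / (k ! * ((N : ℝ) - 2 * n) ^ k) * exp (-(n ^ 2 / N)) := by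
  have hD : (((N - n) - n : ℕ) : ℝ) = (N : ℝ) - 2 * n := by
    rw [Nat.cast_sub (by omega), Nat.cast_sub (by omega)]; ring
  have hDpos : (0 : ℝ) < (N : ℝ) - 2 * n := by rw [← hD]; exact_mod_cast (by omega : 0 < N - n - n)
  have hfirst : (n.choose k : ℝ) * k ! ≤ n ^ k := by
    have := (le_div_iff₀ (by positivity)).mp (Nat.choose_le_pow_div (α := ℝ) k n)
    exact_mod_cast this
  have hsecond : ((N - n).choose (n - k) : ℝ) * ((N : ℝ) - 2 * n) ^ k ≤
      (N - n).choose n * n ^ k := by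
    rw [← hD]
    exact_mod_cast Nat.choose_sub_mul_pow_le (by omega) hkn
  have hthird : ((N - n).choose n : ℝ) ≤ N.choose n * exp (-(n ^ 2 / N)) := by
    simpa [sq] using Nat.sub_choose_le_choose_mul_exp (by omega : n ≤ N) n
  rw [div_le_iff₀ (by exact_mod_cast Nat.choose_pos (by omega : n ≤ N)), div_mul_eq_mul_div,
    div_mul_eq_mul_div, le_div_iff₀ (by positivity)]
  calc (n.choose k * (N - n).choose (n - k) : ℝ) * (k ! * ((N : ℝ) - 2 * n) ^ k)
      = (n.choose k * k ! : ℝ) * ((N - n).choose (n - k) * ((N : ℝ) - 2 * n) ^ k) := by ring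
    _ ≤ n ^ k * ((N - n).choose n * n ^ k) := by gcongr
    _ ≤ n ^ k * ((N.choose n * exp (-(n ^ 2 / N))) * n ^ k) := by gcongr
    _ = n ^ (2 * k) * exp (-(n ^ 2 / N)) * N.choose n := by ring

theorem inv_one_sub_le_exp_add_three_mul_sq {x : ℝ} (hx : x ≤ 2 / 3) :
    (1 - x)⁻¹ ≤ exp (x + 3 * x ^ 2) := by
  rw [inv_le_iff_one_le_mul₀' (by linarith)]
  calc (1 : ℝ) ≤ (1 - x) * (x + 3 * x ^ 2 + 1) := by
        nlinarith [mul_nonneg (sq_nonneg x) (by linarith : (0 : ℝ) ≤ 2 - 3 * x)]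
    _ ≤ (1 - x) * exp (x + 3 * x ^ 2) :=
        mul_le_mul_of_nonneg_left (add_one_le_exp _) (by linarith)

theorem div_sub_two_mul_pow_le_exp {n N : ℝ} (hN : 0 < N) (hnN : 3 * n ≤ N) {k : ℕ}
    (hk : k * n ^ 2 ≤ N ^ 2) : (N / (N - 2 * n)) ^ k ≤ exp 12 * exp (2 * k * n / N) := by
  set x := 2 * n / N with hx
  have hx23 : x ≤ 2 / 3 := by rw [hx, div_le_iff₀ hN]; linarith
  have hbase : N / (N - 2 * n) = (1 - x)⁻¹ := by
    rw [hx]; field_simp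
  have hquad : k * (3 * x ^ 2) ≤ 12 := by
    have hN2 : (0 : ℝ) < N ^ 2 := by positivity
    have : k * (3 * x ^ 2) = 12 * (k * n ^ 2 / N ^ 2) := by rw [hx]; ring
    rw [this]
    nlinarith [(div_le_one hN2).mpr hk]
  calc (N / (N - 2 * n)) ^ k ≤ exp (x + 3 * x ^ 2) ^ k := by
        rw [hbase]; gcongr
        · exact inv_nonneg.mpr (by linarith)
        · exact inv_one_sub_le_exp_add_three_mul_sq hx23
    _ = exp (k * (3 * x ^ 2)) * exp (2 * k * n / N) := by
        rw [← exp_nat_mul, ← exp_add, hx]; ring_nf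
    _ ≤ exp 12 * exp (2 * k * n / N) := by gcongr

theorem pow_div_factorial_le {a : ℝ} (ha : 0 ≤ a) (k : ℕ) :
    a ^ k / k ! ≤ (exp 1 * a / k) ^ k / √(max (k : ℝ) 1) := by
  rcases k.eq_zero_or_pos with rfl | hk
  · simp
  have hkR : (0 : ℝ) < k := by exact_mod_cast hk
  rw [div_le_div_iff₀ (by positivity) (by positivity)]
  calc a ^ k * √(max (k : ℝ) 1)
        = (exp 1 * a / k) ^ k * (√(max (k : ℝ) 1) * (k / exp 1) ^ k) := by
        rw [mul_left_comm, ← mul_pow]; field_simp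
    _ ≤ (exp 1 * a / k) ^ k * k ! := by
        gcongr; exact Nat.sqrt_max_one_mul_div_exp_pow_le_factorial k

-- At `x = 0` this reads `0 ^ k ≤ exp (k * log 0) = 1`: how the convention for `k = 0` is met.
theorem pow_le_exp_mul_log {x : ℝ} (hx : 0 ≤ x) (k : ℕ) : x ^ k ≤ exp (k * log x) := by
  rcases hx.eq_or_lt with rfl | hx
  · simpa using zero_pow_le_one (M₀ := ℝ) k
  · rw [exp_nat_mul, exp_log hx]

theorem pow_three_le_sq_of_rpow_le {n N : ℝ} (hn : 0 ≤ n) (h : n ^ (3 / 2 : ℝ) ≤ N) :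
    n ^ 3 ≤ N ^ 2 :=
  calc n ^ 3 = (n ^ (3 / 2 : ℝ)) ^ 2 := by
        rw [← rpow_natCast, ← rpow_natCast (n ^ (3 / 2 : ℝ)), ← rpow_mul hn]; norm_num
    _ ≤ N ^ 2 := pow_le_pow_left₀ (rpow_nonneg hn _) h 2

theorem sq_pow_div_factorial_mul_pow_le {n N : ℝ} (hN : 0 < N) (hnN : 3 * n ≤ N)
    {k : ℕ} (hk : k * n ^ 2 ≤ N ^ 2) :
    n ^ (2 * k) / (k ! * (N - 2 * n) ^ k) ≤
      exp 12 / √(max (k : ℝ) 1) * ((exp 1 * n ^ 2 / (N * k)) ^ k * exp (2 * k * n / N)) := by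
  have hD : 0 < N - 2 * n := by linarith
  calc n ^ (2 * k) / (k ! * (N - 2 * n) ^ k) = (n ^ 2 / (N - 2 * n)) ^ k / k ! := by
        rw [div_pow, pow_mul, div_div, mul_comm]
    _ ≤ (exp 1 * (n ^ 2 / (N - 2 * n)) / k) ^ k / √(max (k : ℝ) 1) :=
        pow_div_factorial_le (by positivity) k
    _ = (exp 1 * n ^ 2 / (N * k)) ^ k * (N / (N - 2 * n)) ^ k / √(max (k : ℝ) 1) := by
        rw [← mul_pow]; congr 2; field_simp
    _ ≤ (exp 1 * n ^ 2 / (N * k)) ^ k * (exp 12 * exp (2 * k * n / N)) / √(max (k : ℝ) 1) := by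
        gcongr; exact div_sub_two_mul_pow_le_exp hN hnN hk
    _ = _ := by ring

/-- **Asymptotics of binomial coefficients (simplified form).**  There is an absolute
constant C < ∞ such that for all integers 0 ≤ k ≤ n ≤ N/3 with N ≥ n^{3/2},
`C(n,k) C(N−n,n−k) / C(N,n) ≤ (C n / (√(k∨1) ((n−k)∨1))) exp(k log(e n²/(Nk)) − n²/N + 2kn/N)`,
where `k log(e n²/(Nk))` is interpreted as 0 for k = 0. -/
theorem binom_asymptotics_simplified :
    ∃ C : ℝ, 0 < C ∧ ∀ k n N : ℕ, 0 < n → 0 < N → k ≤ n → 3 * n ≤ N →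
      (n : ℝ) ^ ((3 : ℝ) / 2) ≤ (N : ℝ) →
      ((n.choose k : ℝ) * ((N - n).choose (n - k) : ℝ)) / (N.choose n : ℝ) ≤
        C * n / (Real.sqrt (max (k : ℝ) 1) * max ((n : ℝ) - k) 1) *
          Real.exp ((k : ℝ) * Real.log (Real.exp 1 * (n : ℝ) ^ 2 / (N * k))
            - (n : ℝ) ^ 2 / N + 2 * k * n / N) := by
  refine ⟨exp 12, exp_pos 12, fun k n N hn hN hkn hnN hrpow => ?_⟩
  have hnR : (1 : ℝ) ≤ n := by exact_mod_cast hn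
  have hknR : (k : ℝ) ≤ n := by exact_mod_cast hkn
  have hkN : (k : ℝ) * n ^ 2 ≤ N ^ 2 := by
    nlinarith [pow_three_le_sq_of_rpow_le (Nat.cast_nonneg n) hrpow, sq_nonneg (n : ℝ)]
  have hslack : exp 12 / √(max (k : ℝ) 1) ≤
      exp 12 * n / (√(max (k : ℝ) 1) * max ((n : ℝ) - k) 1) := by
    rw [mul_div_mul_comm]
    exact le_mul_of_one_le_right (by positivity)
      ((one_le_div (by positivity)).mpr (max_le (by linarith) hnR))
  calc ((n.choose k : ℝ) * ((N - n).choose (n - k) : ℝ)) / (N.choose n : ℝ)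
      ≤ n ^ (2 * k) / (k ! * ((N : ℝ) - 2 * n) ^ k) * exp (-(n ^ 2 / N)) :=
        Nat.choose_mul_choose_sub_div_choose_le hkn (by omega)
    _ ≤ exp 12 / √(max (k : ℝ) 1) * ((exp 1 * n ^ 2 / (N * k)) ^ k * exp (2 * k * n / N)) *
          exp (-(n ^ 2 / N)) := by
        gcongr
        exact sq_pow_div_factorial_mul_pow_le (by exact_mod_cast hN)
          (by exact_mod_cast hnN) hkN
    _ ≤ exp 12 * n / (√(max (k : ℝ) 1) * max ((n : ℝ) - k) 1) *
          (exp (k * log (exp 1 * n ^ 2 / (N * k))) * exp (2 * k * n / N)) * exp (-(n ^ 2 / N)) := by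
        gcongr
        exact pow_le_exp_mul_log (by positivity) k
    _ = _ := by rw [mul_assoc, ← exp_add, ← exp_add]; ring_nf

end
end

section
/- Fix A ∈ ℝ and positive integers n ≤ N, and let (E_S)_{S ∈ S} be any family of events, each measurable with respect to X. Define the truncated likelihood ratio L^E_π = (1/|S|) · Σ_{S ∈ S} exp(A·X_S − A²n²/2) · 1_{E_S}. Then the minimax risk satisfies R_n(A) ≥ E₀(L^E_π) − (1/2)·√(Var₀(L^E_π)), where E₀ and Var₀ denote expectation and variance under P₀. -/
/-! Each truncated term `exp(A X_S − A²n²/2) 1_{E_S}` is dominated by the likelihood ratio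
`dP_{θ_S}/dP₀` of the block alternative `θ_S = A · 1_{R×C}`, so averaging over `S` gives
`∫_U L dP₀ ≤ sup_θ P_θ(U)` for every measurable `U`. Hence the risk of a rejection region `T` is at
least `P₀(T) + ∫_{Tᶜ} L dP₀ ≥ E₀ min(1, L)`. Taking `U` to be everything gives `m := E₀ L ≤ 1`, so
`min(1, L) ≥ min(L, m) = (L + m − |L − m|) / 2`, and `E₀|L − m| ≤ √Var₀ L` by Cauchy–Schwarz. -/

open MeasureTheory ProbabilityTheory Real Filter Topology

noncomputable section

/-- Law of the N×N Gaussian observation matrix with mean matrix θ and unit variances. -/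
def PTheta (N : ℕ) (θ : Fin N → Fin N → ℝ) : Measure (Fin N → Fin N → ℝ) :=
  Measure.pi fun i => Measure.pi fun j => gaussianReal (θ i j) 1

/-- Parameter space Θ(A, n, N). -/
def ThetaSet (A : ℝ) (n N : ℕ) : Set (Fin N → Fin N → ℝ) :=
  {θ | ∃ R C : Finset (Fin N), R.card = n ∧ C.card = n ∧
    (∀ i j, i ∈ R → j ∈ C → A ≤ θ i j) ∧
    (∀ i j, ¬(i ∈ R ∧ j ∈ C) → θ i j = 0)}

/-- Risk of the test with rejection region `T`: type-I error plus worst-case type-II error. -/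
def testRisk (n N : ℕ) (A : ℝ) (T : Set (Fin N → Fin N → ℝ)) : ℝ :=
  (PTheta N 0 T).toReal + ⨆ θ : ThetaSet A n N, (PTheta N θ.1 Tᶜ).toReal

/-- Minimax risk over all (measurable) tests. -/
def minimaxRisk (n N : ℕ) (A : ℝ) : ℝ :=
  ⨅ T : {T : Set (Fin N → Fin N → ℝ) // MeasurableSet T}, testRisk n N A T.1

/-- The family S of n×n product subsets R×C of [N]×[N]. -/
def SIdx (n N : ℕ) : Type :=
  {p : Finset (Fin N) × Finset (Fin N) // p.1.card = n ∧ p.2.card = n}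

instance (n N : ℕ) : Fintype (SIdx n N) := by unfold SIdx; infer_instance

/-- The sum X_S of the entries of x over the product set S = R×C. -/
def XS {n N : ℕ} (S : SIdx n N) (x : Fin N → Fin N → ℝ) : ℝ :=
  ∑ i ∈ S.1.1, ∑ j ∈ S.1.2, x i j

/-- The likelihood ratio truncated by a family of events (E_S)_{S ∈ S}:
`L^E_π = (1/|S|) Σ_S exp(A X_S − A²n²/2) 1_{E_S}`. -/
def LpiE (n N : ℕ) (A : ℝ) (E : SIdx n N → Set (Fin N → Fin N → ℝ))
    (x : Fin N → Fin N → ℝ) : ℝ :=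
  (((N.choose n : ℝ)) ^ 2)⁻¹ * ∑ S : SIdx n N,
    (E S).indicator (fun y => Real.exp (A * XS S y - A ^ 2 * (n : ℝ) ^ 2 / 2)) x

open scoped ENNReal NNReal

section PiWithDensity

variable {ι : Type*} [Fintype ι] {α : ι → Type*} [∀ i, MeasurableSpace (α i)]
  {μ : ∀ i, Measure (α i)} [∀ i, IsProbabilityMeasure (μ i)]

theorem lintegral_pi_prod_eq_prod {f : ∀ i, α i → ℝ≥0∞} (hf : ∀ i, Measurable (f i)) :
    ∫⁻ x, ∏ i, f i (x i) ∂Measure.pi μ = ∏ i, ∫⁻ y, f i y ∂μ i := by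
  rw [lintegral_prod_eq_prod_lintegral_of_indepFun _ _
    (iIndepFun_pi fun i => (hf i).aemeasurable) fun i => (hf i).comp (measurable_pi_apply i)]
  exact Finset.prod_congr rfl fun i _ => (measurePreserving_eval μ i).lintegral_comp (hf i)

theorem MeasureTheory.Measure.pi_withDensity {ν : ∀ i, Measure (α i)} [∀ i, SigmaFinite (ν i)]
    {f : ∀ i, α i → ℝ≥0∞} (hf : ∀ i, Measurable (f i))
    (hν : ∀ i, ν i = (μ i).withDensity (f i)) :
    Measure.pi ν = (Measure.pi μ).withDensity fun x => ∏ i, f i (x i) := by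
  refine Measure.pi_eq fun s hs => ?_
  have h_indicator : (Set.univ.pi s).indicator (fun x => ∏ i, f i (x i))
      = fun x => ∏ i, (s i).indicator (f i) (x i) := by
    funext x
    classical
    simp only [Set.indicator_apply, Set.mem_univ_pi, Finset.prod_ite_zero, Finset.mem_univ,
      forall_const]
  rw [withDensity_apply _ (.univ_pi hs), ← lintegral_indicator (.univ_pi hs), h_indicator,
    lintegral_pi_prod_eq_prod fun i => (hf i).indicator (hs i)]
  refine Finset.prod_congr rfl fun i _ => ?_
  rw [hν, withDensity_apply _ (hs i), lintegral_indicator (hs i)]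

end PiWithDensity

theorem gaussianReal_eq_withDensity (m : ℝ) {v : ℝ≥0} (hv : v ≠ 0) :
    gaussianReal m v = (gaussianReal 0 v).withDensity
      fun x => ENNReal.ofReal (exp ((m * x - m ^ 2 / 2) / v)) := by
  rw [gaussianReal_of_var_ne_zero _ hv, gaussianReal_of_var_ne_zero _ hv,
    ← withDensity_mul _ (measurable_gaussianPDF _ _) (by fun_prop)]
  congr 1
  funext x
  simp only [gaussianPDF, gaussianPDFReal, Pi.mul_apply]
  rw [← ENNReal.ofReal_mul (by positivity), mul_assoc _ (exp _), ← exp_add]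
  congr 3
  field_simp
  ring

instance isProbabilityMeasure_PTheta (N : ℕ) (θ : Fin N → Fin N → ℝ) :
    IsProbabilityMeasure (PTheta N θ) := by
  unfold PTheta; infer_instance

theorem PTheta_eq_withDensity (N : ℕ) (θ : Fin N → Fin N → ℝ) :
    PTheta N θ = (PTheta N 0).withDensity
      fun x => ENNReal.ofReal (exp (∑ i, ∑ j, (θ i j * x i j - θ i j ^ 2 / 2))) := by
  have h_row (i : Fin N) : Measure.pi (fun j => gaussianReal (θ i j) 1)
      = (Measure.pi fun _ => gaussianReal 0 1).withDensity
          fun y => ∏ j, ENNReal.ofReal (exp (θ i j * y j - θ i j ^ 2 / 2)) :=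
    Measure.pi_withDensity (f := fun j t => ENNReal.ofReal (exp (θ i j * t - θ i j ^ 2 / 2)))
      (fun _ => by fun_prop) fun j => by
        simpa only [NNReal.coe_one, div_one] using gaussianReal_eq_withDensity (θ i j) one_ne_zero
  have h := Measure.pi_withDensity (μ := fun _ => Measure.pi fun _ => gaussianReal 0 1)
    (fun i => by fun_prop) h_row
  refine h.trans ?_
  change _ = (Measure.pi fun _ => Measure.pi fun _ => gaussianReal 0 1).withDensity _
  congr 1
  funext x
  simp only [exp_sum]
  rw [ENNReal.ofReal_prod_of_nonneg fun _ _ => by positivity]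
  exact Finset.prod_congr rfl fun i _ =>
    (ENNReal.ofReal_prod_of_nonneg fun _ _ => by positivity).symm

section MinOne

variable {Ω : Type*} [MeasurableSpace Ω] {μ : Measure Ω} [IsProbabilityMeasure μ] {X : Ω → ℝ}

theorem integral_abs_sub_integral_le_sqrt_variance (hX : MemLp X 2 μ) :
    ∫ ω, |X ω - μ[X]| ∂μ ≤ √(variance X μ) := by
  -- `0 ≤ Var |X - m| = E (X - m)² - (E |X - m|)²`
  have h_centered : MemLp (fun ω => |X ω - μ[X]|) 2 μ := (hX.sub (memLp_const _)).abs
  have h_var := variance_nonneg (fun ω => |X ω - μ[X]|) μ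
  rw [variance_eq_sub h_centered] at h_var
  rw [Real.le_sqrt (integral_nonneg fun _ => abs_nonneg _) (variance_nonneg _ _),
    variance_eq_integral hX.aemeasurable]
  simpa only [Pi.pow_apply, sq_abs, sub_nonneg] using h_var

theorem integral_sub_half_sqrt_variance_le_integral_min_one (hX : MemLp X 2 μ) (h1 : μ[X] ≤ 1) :
    μ[X] - 1 / 2 * √(variance X μ) ≤ ∫ ω, min 1 (X ω) ∂μ := by
  have hX1 := hX.integrable one_le_two
  have h_min (a : ℝ) : min a μ[X] = (a + μ[X] - |a - μ[X]|) / 2 := by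
    linarith [min_add_max a μ[X], max_sub_min_eq_abs' a μ[X]]
  have h_add : Integrable (fun ω => X ω + μ[X]) μ := hX1.add (integrable_const _)
  have h_abs : Integrable (fun ω => |X ω - μ[X]|) μ := (hX1.sub (integrable_const _)).abs
  calc μ[X] - 1 / 2 * √(variance X μ)
      ≤ μ[X] - 1 / 2 * ∫ ω, |X ω - μ[X]| ∂μ := by
        linarith [integral_abs_sub_integral_le_sqrt_variance hX]
    _ = ∫ ω, min (X ω) μ[X] ∂μ := by
        simp only [h_min]
        rw [integral_div, integral_sub h_add h_abs,
          integral_add hX1 (integrable_const _), integral_const, probReal_univ, one_smul]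
        ring
    _ ≤ ∫ ω, min 1 (X ω) ∂μ := by
        refine integral_mono ?_ ?_ fun ω => ?_
        · simp only [h_min]
          exact (h_add.sub h_abs).div_const 2
        · exact (integrable_const 1).inf hX1
        · exact min_comm (X ω) μ[X] ▸ min_le_min_right _ h1

theorem integral_min_one_le_measureReal_add_setIntegral_compl (hX : Integrable X μ) {T : Set Ω}
    (hT : MeasurableSet T) : ∫ ω, min 1 (X ω) ∂μ ≤ μ.real T + ∫ ω in Tᶜ, X ω ∂μ := by
  have h_min : Integrable (fun ω => min 1 (X ω)) μ := (integrable_const 1).inf hX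
  rw [← integral_add_compl hT h_min]
  refine add_le_add ?_ ?_
  · calc ∫ ω in T, min 1 (X ω) ∂μ ≤ ∫ _ in T, (1 : ℝ) ∂μ :=
          integral_mono h_min.integrableOn (integrable_const 1) fun _ => min_le_left _ _
      _ = μ.real T := by rw [setIntegral_const, smul_eq_mul, mul_one]
  · exact integral_mono h_min.integrableOn hX.integrableOn fun _ => min_le_right _ _

end MinOne

theorem Finset.sum_sum_ite_mem_and_mem {ι κ M : Type*} [Fintype ι] [Fintype κ]
    [DecidableEq ι] [DecidableEq κ] [AddCommMonoid M] (R : Finset ι) (C : Finset κ)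
    (f : ι → κ → M) :
    ∑ i, ∑ j, (if i ∈ R ∧ j ∈ C then f i j else 0) = ∑ i ∈ R, ∑ j ∈ C, f i j := by
  simp [ite_and, Finset.sum_ite_mem]

section Block

variable {n N : ℕ}

def blockMean (A : ℝ) (S : SIdx n N) : Fin N → Fin N → ℝ :=
  fun i j => if i ∈ S.1.1 ∧ j ∈ S.1.2 then A else 0

theorem blockMean_mem_ThetaSet (A : ℝ) (S : SIdx n N) : blockMean A S ∈ ThetaSet A n N :=
  ⟨S.1.1, S.1.2, S.2.1, S.2.2, fun i j hi hj => by simp [blockMean, hi, hj],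
    fun i j h => if_neg h⟩

def likelihoodRatio (A : ℝ) (S : SIdx n N) (x : Fin N → Fin N → ℝ) : ℝ :=
  exp (A * XS S x - A ^ 2 * (n : ℝ) ^ 2 / 2)

theorem sum_blockMean_mul_sub_sq (A : ℝ) (S : SIdx n N) (x : Fin N → Fin N → ℝ) :
    ∑ i, ∑ j, (blockMean A S i j * x i j - blockMean A S i j ^ 2 / 2)
      = A * XS S x - A ^ 2 * (n : ℝ) ^ 2 / 2 := by
  have h_term (i j : Fin N) : blockMean A S i j * x i j - blockMean A S i j ^ 2 / 2
      = if i ∈ S.1.1 ∧ j ∈ S.1.2 then A * x i j - A ^ 2 / 2 else 0 := by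
    unfold blockMean
    split_ifs <;> ring
  simp only [h_term]
  refine (Finset.sum_sum_ite_mem_and_mem _ _ _).trans ?_
  simp only [Finset.sum_sub_distrib, Finset.sum_const, nsmul_eq_mul, ← Finset.mul_sum, S.2.1,
    S.2.2, XS]
  ring

theorem PTheta_blockMean (A : ℝ) (S : SIdx n N) :
    PTheta N (blockMean A S)
      = (PTheta N 0).withDensity fun x => ENNReal.ofReal (likelihoodRatio A S x) := by
  simp only [PTheta_eq_withDensity N (blockMean A S), sum_blockMean_mul_sub_sq, likelihoodRatio]

theorem measurable_likelihoodRatio (A : ℝ) (S : SIdx n N) : Measurable (likelihoodRatio A S) := by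
  unfold likelihoodRatio XS; fun_prop

theorem setIntegral_likelihoodRatio (A : ℝ) (S : SIdx n N) {U : Set (Fin N → Fin N → ℝ)}
    (hU : MeasurableSet U) :
    ∫ x in U, likelihoodRatio A S x ∂PTheta N 0 = (PTheta N (blockMean A S) U).toReal := by
  rw [PTheta_blockMean, withDensity_apply _ hU, ← integral_toReal]
  · simp only [ENNReal.toReal_ofReal (exp_pos _).le, likelihoodRatio]
  · exact (measurable_likelihoodRatio A S).ennreal_ofReal.aemeasurable
  · exact ae_of_all _ fun _ => ENNReal.ofReal_lt_top

theorem integrable_likelihoodRatio (A : ℝ) (S : SIdx n N) :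
    Integrable (likelihoodRatio A S) (PTheta N 0) := by
  refine ⟨(measurable_likelihoodRatio A S).aestronglyMeasurable,
    (hasFiniteIntegral_iff_ofReal (ae_of_all _ fun _ => (exp_pos _).le)).2 ?_⟩
  have h := measure_lt_top (PTheta N (blockMean A S)) .univ
  rwa [PTheta_blockMean, withDensity_apply _ .univ, setLIntegral_univ] at h

theorem likelihoodRatio_sq (A : ℝ) (S : SIdx n N) (x : Fin N → Fin N → ℝ) :
    likelihoodRatio A S x ^ 2 = exp (A ^ 2 * (n : ℝ) ^ 2) * likelihoodRatio (2 * A) S x := by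
  simp only [likelihoodRatio, ← exp_nat_mul, ← exp_add]
  ring_nf

theorem memLp_likelihoodRatio (A : ℝ) (S : SIdx n N) :
    MemLp (likelihoodRatio A S) 2 (PTheta N 0) := by
  refine (memLp_two_iff_integrable_sq (measurable_likelihoodRatio A S).aestronglyMeasurable).2 ?_
  simp only [likelihoodRatio_sq]
  exact (integrable_likelihoodRatio (2 * A) S).const_mul _

end Block

section Mixture

variable {n N : ℕ} {A : ℝ} {E : SIdx n N → Set (Fin N → Fin N → ℝ)}

theorem card_SIdx : Fintype.card (SIdx n N) = N.choose n ^ 2 := by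
  calc Fintype.card (SIdx n N)
      = Fintype.card ({R : Finset (Fin N) // R.card = n} × {C : Finset (Fin N) // C.card = n}) :=
        Fintype.card_congr <| Equiv.subtypeProdEquivProd (p := fun R : Finset (Fin N) => R.card = n)
          (q := fun C : Finset (Fin N) => C.card = n)
    _ = N.choose n ^ 2 := by rw [Fintype.card_prod, Fintype.card_finset_len, Fintype.card_fin, sq]

theorem LpiE_eq_sum_indicator (x : Fin N → Fin N → ℝ) :
    LpiE n N A E x = ((N.choose n : ℝ) ^ 2)⁻¹ * ∑ S, (E S).indicator (likelihoodRatio A S) x :=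
  rfl

theorem memLp_LpiE (hE : ∀ S, MeasurableSet (E S)) : MemLp (LpiE n N A E) 2 (PTheta N 0) :=
  (memLp_finsetSum _ fun S _ => (memLp_likelihoodRatio A S).indicator (hE S)).const_mul _

theorem setIntegral_LpiE_le_iSup (hnN : n ≤ N) (hE : ∀ S, MeasurableSet (E S))
    {U : Set (Fin N → Fin N → ℝ)} (hU : MeasurableSet U) :
    ∫ x in U, LpiE n N A E x ∂PTheta N 0 ≤ ⨆ θ : ThetaSet A n N, (PTheta N θ U).toReal := by
  have h_bdd : BddAbove (Set.range fun θ : ThetaSet A n N => (PTheta N θ U).toReal) :=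
    ⟨1, by rintro _ ⟨θ, rfl⟩; exact measureReal_le_one⟩
  have h_int (S : SIdx n N) := (integrable_likelihoodRatio A S).indicator (hE S)
  have h_block (S : SIdx n N) : ∫ x in U, (E S).indicator (likelihoodRatio A S) x ∂PTheta N 0
      ≤ ⨆ θ : ThetaSet A n N, (PTheta N θ U).toReal :=
    calc _ ≤ ∫ x in U, likelihoodRatio A S x ∂PTheta N 0 :=
          integral_mono (h_int S).integrableOn (integrable_likelihoodRatio A S).integrableOn
            (Set.indicator_le_self' fun _ _ => (exp_pos _).le)
      _ = (PTheta N (blockMean A S) U).toReal := setIntegral_likelihoodRatio A S hU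
      _ ≤ _ := le_ciSup h_bdd ⟨_, blockMean_mem_ThetaSet A S⟩
  have h_choose : (0 : ℝ) < N.choose n ^ 2 := by
    have := Nat.choose_pos hnN
    positivity
  simp only [LpiE_eq_sum_indicator]
  rw [integral_const_mul, integral_finsetSum _ fun S _ => (h_int S).integrableOn,
    inv_mul_le_iff₀ h_choose]
  calc _ ≤ ∑ _ : SIdx n N, ⨆ θ : ThetaSet A n N, (PTheta N θ U).toReal :=
        Finset.sum_le_sum fun S _ => h_block S
    _ = _ := by simp [card_SIdx]

theorem integral_LpiE_le_one (hnN : n ≤ N) (hE : ∀ S, MeasurableSet (E S)) :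
    ∫ x, LpiE n N A E x ∂PTheta N 0 ≤ 1 :=
  calc ∫ x, LpiE n N A E x ∂PTheta N 0 = ∫ x in .univ, LpiE n N A E x ∂PTheta N 0 :=
        setIntegral_univ.symm
    _ ≤ ⨆ θ : ThetaSet A n N, (PTheta N θ .univ).toReal := setIntegral_LpiE_le_iSup hnN hE .univ
    _ ≤ 1 := Real.iSup_le (fun θ => by simp) zero_le_one

end Mixture

theorem risk_lowerbound_truncated_general (n N : ℕ) (hnN : n ≤ N) (A : ℝ)
    (E : SIdx n N → Set (Fin N → Fin N → ℝ)) (hE : ∀ S, MeasurableSet (E S)) :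
    (∫ x, LpiE n N A E x ∂(PTheta N 0))
        - (1 / 2) * Real.sqrt (variance (LpiE n N A E) (PTheta N 0))
      ≤ minimaxRisk n N A := by
  have : Nonempty {T : Set (Fin N → Fin N → ℝ) // MeasurableSet T} := ⟨⟨∅, .empty⟩⟩
  refine le_ciInf fun ⟨T, hT⟩ => ?_
  have hL := memLp_LpiE (A := A) hE
  calc _ ≤ ∫ x, min 1 (LpiE n N A E x) ∂PTheta N 0 :=
        integral_sub_half_sqrt_variance_le_integral_min_one hL (integral_LpiE_le_one hnN hE)
    _ ≤ (PTheta N 0).real T + ∫ x in Tᶜ, LpiE n N A E x ∂PTheta N 0 :=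
        integral_min_one_le_measureReal_add_setIntegral_compl (hL.integrable one_le_two) hT
    _ ≤ testRisk n N A T := add_le_add le_rfl (setIntegral_LpiE_le_iSup hnN hE hT.compl)

/-- **Truncated-likelihood lower bound on the minimax risk.**  For any A ∈ ℝ, any
positive integers n ≤ N, and any family of measurable events (E_S)_{S ∈ S},
`R_n(A) ≥ E₀(L^E_π) − (1/2)√(Var₀(L^E_π))`. -/
theorem risk_lowerbound_truncated (n N : ℕ) (hn : 0 < n) (hnN : n ≤ N) (A : ℝ)
    (E : SIdx n N → Set (Fin N → Fin N → ℝ)) (hE : ∀ S, MeasurableSet (E S)) :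
    (∫ x, LpiE n N A E x ∂(PTheta N 0))
        - (1 / 2) * Real.sqrt (variance (LpiE n N A E) (PTheta N 0))
      ≤ minimaxRisk n N A :=
  risk_lowerbound_truncated_general n N hnN A E hE

end
end

section
/- Let Z₁, Z₂ be independent standard normal random variables, let ρ ∈ [0, 1), and set X = Z₁ and Y = ρ·Z₁ + √(1−ρ²)·Z₂ (so (X, Y) is bivariate normal with zero means, unit variances and correlation ρ). Then for all a, b ∈ ℝ: P(X > a, Y > b) = P(X > a)·P(Y > b) + (1/(2π)) · ∫₀^{arcsin ρ} exp( −(a² + b² − 2ab·sin θ) / (2·cos²θ) ) dθ. -/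
/-!
Write `ρ = sin θ₀` and `Y_θ = X sin θ + Z₂ cos θ` for `θ ∈ [0, θ₀]`. Conditioning on `X = x`,
`P(X > a, Y_θ > b) = ∫_{x > a} φ(x) Φ̄(u) dx` with `u = (b - x sin θ) / cos θ`, which is
`Φ̄(a) Φ̄(b)` at `θ = 0`. Its `θ`-derivative has integrand `φ(x) φ(u) (x - b sin θ) / cos² θ`, and
`φ(x) φ(u) = (2π)⁻¹ exp(-(x² + b² - 2xb sin θ) / (2 cos² θ))` is a Gaussian in `x` whose
`x`-derivative is minus that integrand; so the `x`-integral is this Gaussian at `x = a`.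
Integrating over `θ ∈ [0, θ₀]` (the fundamental theorem of calculus in `θ` for each `x`, then
Fubini) gives the formula.
-/

open MeasureTheory ProbabilityTheory Real
open Set Filter Topology Function
open scoped Interval NNReal

noncomputable section

lemma continuous_gaussianPDFReal (μ : ℝ) (v : ℝ≥0) : Continuous (gaussianPDFReal μ v) := by
  rw [gaussianPDFReal_def]
  fun_prop

local notation "φ" => gaussianPDFReal 0 1

lemma gaussianPDFReal_zero_one (x : ℝ) : φ x = (√(2 * π))⁻¹ * exp (-x ^ 2 / 2) := by
  simp [gaussianPDFReal]

def stdNormalTail (t : ℝ) : ℝ := (gaussianReal 0 1).real (Ioi t)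

lemma stdNormalTail_eq_integral (t : ℝ) : stdNormalTail t = ∫ x in Ioi t, φ x := by
  rw [stdNormalTail, measureReal_def, gaussianReal_apply_eq_integral 0 one_ne_zero,
    ENNReal.toReal_ofReal
      (setIntegral_nonneg measurableSet_Ioi fun x _ ↦ gaussianPDFReal_nonneg 0 1 x)]

lemma hasDerivAt_stdNormalTail (t : ℝ) : HasDerivAt stdNormalTail (-φ t) t := by
  have h : stdNormalTail = fun t ↦ stdNormalTail 0 - ∫ x in (0 : ℝ)..t, φ x := by
    ext t
    rw [stdNormalTail_eq_integral, stdNormalTail_eq_integral,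
      ← intervalIntegral.integral_Ioi_sub_Ioi' (integrable_gaussianPDFReal 0 1).integrableOn
        (integrable_gaussianPDFReal 0 1).integrableOn, sub_sub_cancel]
  rw [h]
  exact ((continuous_gaussianPDFReal 0 1).integral_hasStrictDerivAt 0 t).hasDerivAt.const_sub _

lemma antitone_stdNormalTail : Antitone stdNormalTail := fun _ _ hst ↦
  measureReal_mono (Ioi_subset_Ioi hst)

lemma measureReal_prod_apply {α β : Type*} [MeasurableSpace α] [MeasurableSpace β]
    {μ : Measure α} {ν : Measure β} [SFinite μ] [IsFiniteMeasure ν] {s : Set (α × β)}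
    (hs : MeasurableSet s) : (μ.prod ν).real s = ∫ x, ν.real (Prod.mk x ⁻¹' s) ∂μ := by
  rw [measureReal_def, Measure.prod_apply hs]
  exact (integral_toReal (measurable_measure_prodMk_left hs).aemeasurable
    (ae_of_all _ fun _ ↦ measure_lt_top _ _)).symm

lemma gaussianReal_prod_map_linear (m₁ m₂ : ℝ) (v₁ v₂ : ℝ≥0) (s c : ℝ) :
    ((gaussianReal m₁ v₁).prod (gaussianReal m₂ v₂)).map (fun z ↦ s * z.1 + c * z.2) =
      gaussianReal (s * m₁ + c * m₂)
        (⟨s ^ 2, sq_nonneg s⟩ * v₁ + ⟨c ^ 2, sq_nonneg c⟩ * v₂) := by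
  have h : (fun z : ℝ × ℝ ↦ s * z.1 + c * z.2) = (fun z ↦ z.1 + z.2) ∘ Prod.map (s * ·) (c * ·) :=
    rfl
  rw [h, ← Measure.map_map (by fun_prop) (by fun_prop), ← Measure.map_prod_map _ _ (by fun_prop)
    (by fun_prop), gaussianReal_map_const_mul, gaussianReal_map_const_mul,
    ← gaussianReal_conv_gaussianReal]
  rfl

lemma setIntegral_gaussianReal_eq_setIntegral_mul {μ : ℝ} {v : ℝ≥0} (hv : v ≠ 0) (f : ℝ → ℝ)
    {s : Set ℝ} (hs : MeasurableSet s) :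
    ∫ x in s, f x ∂gaussianReal μ v = ∫ x in s, gaussianPDFReal μ v x * f x := by
  rw [← integral_indicator hs, integral_gaussianReal_eq_integral_smul hv,
    ← integral_indicator hs]
  congr with x
  by_cases hx : x ∈ s <;> simp [hx]

lemma measureReal_prod_gaussianReal_fst_lt (a : ℝ) :
    ((gaussianReal 0 1).prod (gaussianReal 0 1)).real {z : ℝ × ℝ | a < z.1} =
      stdNormalTail a := by
  rw [show {z : ℝ × ℝ | a < z.1} = Ioi a ×ˢ univ by ext; simp, measureReal_prod_prod,
    probReal_univ, mul_one, stdNormalTail]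

lemma measureReal_prod_gaussianReal_linear_lt {s c : ℝ} (hsc : s ^ 2 + c ^ 2 = 1) (b : ℝ) :
    ((gaussianReal 0 1).prod (gaussianReal 0 1)).real {z : ℝ × ℝ | b < s * z.1 + c * z.2} =
      stdNormalTail b := by
  have hmap : ((gaussianReal 0 1).prod (gaussianReal 0 1)).map (fun z ↦ s * z.1 + c * z.2) =
      gaussianReal 0 1 := by
    rw [gaussianReal_prod_map_linear]
    congr 1
    · ring
    · ext
      change s ^ 2 * 1 + c ^ 2 * 1 = 1
      simpa using hsc
  rw [stdNormalTail]
  conv_rhs => rw [← hmap]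
  rw [map_measureReal_apply (by fun_prop) measurableSet_Ioi]
  rfl

lemma measureReal_prod_gaussianReal_fst_lt_linear_lt (ρ : ℝ) {c : ℝ} (hc : 0 < c) (a b : ℝ) :
    ((gaussianReal 0 1).prod (gaussianReal 0 1)).real
        {z : ℝ × ℝ | a < z.1 ∧ b < ρ * z.1 + c * z.2} =
      ∫ x in Ioi a, φ x * stdNormalTail ((b - ρ * x) / c) := by
  have hS : MeasurableSet {z : ℝ × ℝ | a < z.1 ∧ b < ρ * z.1 + c * z.2} :=
    (measurableSet_lt measurable_const measurable_fst).inter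
      (measurableSet_lt measurable_const
        (by fun_prop : Measurable fun z : ℝ × ℝ ↦ ρ * z.1 + c * z.2))
  have hslice (x : ℝ) :
      (gaussianReal 0 1).real (Prod.mk x ⁻¹' {z | a < z.1 ∧ b < ρ * z.1 + c * z.2}) =
        (Ioi a).indicator (fun x ↦ stdNormalTail ((b - ρ * x) / c)) x := by
    by_cases hx : a < x
    · have hpre : Prod.mk x ⁻¹' {z | a < z.1 ∧ b < ρ * z.1 + c * z.2} = Ioi ((b - ρ * x) / c) := by
        ext y
        simp only [mem_preimage, mem_ofPred_eq, mem_Ioi, hx, true_and, div_lt_iff₀ hc]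
        constructor <;> intro h <;> linarith
      rw [hpre, indicator_of_mem (mem_Ioi.2 hx), stdNormalTail]
    · simp [hx]
  rw [measureReal_prod_apply hS]
  simp_rw [hslice]
  rw [integral_indicator measurableSet_Ioi,
    setIntegral_gaussianReal_eq_setIntegral_mul one_ne_zero _ measurableSet_Ioi]

lemma cos_le_cos_of_mem_uIcc_zero {θ₀ θ : ℝ} (hθ₀ : |θ₀| ≤ π) (hθ : θ ∈ uIcc 0 θ₀) :
    cos θ₀ ≤ cos θ := by
  rw [← cos_abs θ₀, ← cos_abs θ]
  exact cos_le_cos_of_nonneg_of_le_pi (abs_nonneg θ) hθ₀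
    (by simpa using abs_sub_left_of_mem_uIcc hθ)

lemma cos_pos_of_mem_uIcc_zero {θ₀ θ : ℝ} (hθ₀ : θ₀ ∈ Ioo (-(π / 2)) (π / 2))
    (hθ : θ ∈ uIcc 0 θ₀) : 0 < cos θ :=
  cos_pos_of_mem_Ioo (ordConnected_Ioo.uIcc_subset ⟨by linarith [pi_pos], by linarith [pi_pos]⟩
    hθ₀ hθ)

/-- `cos θ` times the standard bivariate normal density with correlation `sin θ`, at `(a, b)`. -/
def angularDensity (a b θ : ℝ) : ℝ :=
  (2 * π)⁻¹ * exp (-(a ^ 2 + b ^ 2 - 2 * a * b * sin θ) / (2 * cos θ ^ 2))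

def tailThreshold (b x θ : ℝ) : ℝ := (b - x * sin θ) / cos θ

lemma gaussianPDFReal_mul_gaussianPDFReal_tailThreshold {θ : ℝ} (hθ : cos θ ≠ 0) (b x : ℝ) :
    φ x * φ (tailThreshold b x θ) = angularDensity x b θ := by
  have hπ : (√(2 * π))⁻¹ * (√(2 * π))⁻¹ = (2 * π)⁻¹ := by
    rw [← mul_inv, Real.mul_self_sqrt (by positivity)]
  have hexp : -x ^ 2 / 2 + -((b - x * sin θ) / cos θ) ^ 2 / 2 =
      -(x ^ 2 + b ^ 2 - 2 * x * b * sin θ) / (2 * cos θ ^ 2) := by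
    field_simp
    linear_combination (-x ^ 2) * sin_sq_add_cos_sq θ
  rw [gaussianPDFReal_zero_one, gaussianPDFReal_zero_one, angularDensity, tailThreshold,
    ← hexp, exp_add, ← hπ]
  ring

lemma hasDerivAt_tailThreshold {θ : ℝ} (hθ : cos θ ≠ 0) (b x : ℝ) :
    HasDerivAt (tailThreshold b x) ((b * sin θ - x) / cos θ ^ 2) θ := by
  have h := (((hasDerivAt_sin θ).const_mul x).const_sub b).div (hasDerivAt_cos θ) hθ
  refine h.congr_deriv ?_
  field_simp
  linear_combination (-x) * sin_sq_add_cos_sq θ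

lemma hasDerivAt_gaussianPDFReal_mul_stdNormalTail_tailThreshold {θ : ℝ} (hθ : cos θ ≠ 0)
    (b x : ℝ) :
    HasDerivAt (fun θ ↦ φ x * stdNormalTail (tailThreshold b x θ))
      (angularDensity x b θ * (x - b * sin θ) / cos θ ^ 2) θ := by
  have h := ((hasDerivAt_stdNormalTail _).comp θ (hasDerivAt_tailThreshold hθ b x)).const_mul (φ x)
  refine h.congr_deriv ?_
  rw [← gaussianPDFReal_mul_gaussianPDFReal_tailThreshold hθ]
  ring

lemma hasDerivAt_angularDensity (b θ x : ℝ) :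
    HasDerivAt (fun x ↦ angularDensity x b θ)
      (-(angularDensity x b θ * (x - b * sin θ) / cos θ ^ 2)) x := by
  have hq := (((hasDerivAt_pow 2 x).add_const (b ^ 2)).sub
    ((((hasDerivAt_id' x).const_mul 2).mul_const b).mul_const (sin θ))).neg.div_const
    (2 * cos θ ^ 2)
  refine (hq.exp.const_mul (2 * π)⁻¹).congr_deriv ?_
  simp only [angularDensity, Pi.neg_apply, Pi.sub_apply]
  push_cast
  ring

lemma tendsto_angularDensity_atTop {θ : ℝ} (hθ : cos θ ≠ 0) (b : ℝ) :
    Tendsto (fun x ↦ angularDensity x b θ) atTop (𝓝 0) := by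
  have hsq : Tendsto (fun x ↦ (x - b * sin θ) ^ 2 + b ^ 2 * cos θ ^ 2) atTop atTop :=
    tendsto_atTop_add_const_right _ _
      ((tendsto_pow_atTop two_ne_zero).comp (tendsto_atTop_add_const_right _ _ tendsto_id))
  have hc : 0 < 2 * cos θ ^ 2 := by positivity
  have hexp : Tendsto (fun x ↦ -(x ^ 2 + b ^ 2 - 2 * x * b * sin θ) / (2 * cos θ ^ 2))
      atTop atBot := by
    refine ((tendsto_neg_atTop_atBot.comp hsq).atBot_div_const hc).congr fun x ↦ ?_
    simp only [Function.comp]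
    congr 1
    linear_combination (-b ^ 2) * sin_sq_add_cos_sq θ
  simpa [angularDensity] using (tendsto_exp_atBot.comp hexp).const_mul (2 * π)⁻¹

lemma integrable_abs_add_mul_exp_neg_mul_sq {k : ℝ} (hk : 0 < k) (B : ℝ) :
    Integrable fun x : ℝ ↦ (|x| + B) * exp (-k * x ^ 2) := by
  have h := (integrable_mul_exp_neg_mul_sq hk).norm.add ((integrable_exp_neg_mul_sq hk).const_mul B)
  refine h.congr (ae_of_all _ fun x ↦ ?_)
  simp only [Pi.add_apply, norm_mul, Real.norm_eq_abs, abs_exp]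
  ring

lemma abs_angularDensity_mul_le {c₀ θ : ℝ} (hc₀ : 0 < c₀) (hθ : c₀ ≤ cos θ) (b x : ℝ) :
    |angularDensity x b θ * (x - b * sin θ) / cos θ ^ 2| ≤
      (2 * π)⁻¹ / c₀ ^ 2 * ((|x| + |b|) * exp (-(1 / 2) * x ^ 2)) := by
  have hc : 0 < cos θ := hc₀.trans_le hθ
  have hexp : -(x ^ 2 + b ^ 2 - 2 * x * b * sin θ) / (2 * cos θ ^ 2) =
      -(1 / 2) * x ^ 2 - (b - x * sin θ) ^ 2 / (2 * cos θ ^ 2) := by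
    field_simp
    linear_combination x ^ 2 * sin_sq_add_cos_sq θ
  have hE : angularDensity x b θ ≤ (2 * π)⁻¹ * exp (-(1 / 2) * x ^ 2) := by
    rw [angularDensity, hexp]
    gcongr
    linarith [div_nonneg (sq_nonneg (b - x * sin θ)) (by positivity : (0 : ℝ) ≤ 2 * cos θ ^ 2)]
  have hlin : |x - b * sin θ| ≤ |x| + |b| := by
    calc |x - b * sin θ| ≤ |x| + |b| * |sin θ| := (abs_sub _ _).trans_eq (by rw [abs_mul])
      _ ≤ |x| + |b| := by gcongr; exact mul_le_of_le_one_right (abs_nonneg b) (abs_sin_le_one θ)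
  rw [abs_div, abs_mul, abs_of_pos (by unfold angularDensity; positivity),
    abs_of_pos (by positivity : 0 < cos θ ^ 2)]
  calc angularDensity x b θ * |x - b * sin θ| / cos θ ^ 2
      ≤ (2 * π)⁻¹ * exp (-(1 / 2) * x ^ 2) * (|x| + |b|) / c₀ ^ 2 := by gcongr
    _ = _ := by ring

lemma measurable_angularDensity_mul (b : ℝ) :
    Measurable fun z : ℝ × ℝ ↦ angularDensity z.2 b z.1 * (z.2 - b * sin z.1) / cos z.1 ^ 2 := by
  unfold angularDensity
  fun_prop

lemma integrable_angularDensity_mul {θ : ℝ} (hθ : 0 < cos θ) (b : ℝ) :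
    Integrable fun x ↦ angularDensity x b θ * (x - b * sin θ) / cos θ ^ 2 := by
  refine ((integrable_abs_add_mul_exp_neg_mul_sq one_half_pos |b|).const_mul
    ((2 * π)⁻¹ / cos θ ^ 2)).mono'
    ((measurable_angularDensity_mul b).comp measurable_prodMk_left).aestronglyMeasurable
    (ae_of_all _ fun x ↦ ?_)
  rw [Real.norm_eq_abs]
  exact abs_angularDensity_mul_le hθ le_rfl b x

lemma integral_Ioi_angularDensity_mul {θ : ℝ} (hθ : 0 < cos θ) (a b : ℝ) :
    ∫ x in Ioi a, angularDensity x b θ * (x - b * sin θ) / cos θ ^ 2 = angularDensity a b θ := by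
  have h := integral_Ioi_of_hasDerivAt_of_tendsto
    (hasDerivAt_angularDensity b θ a).continuousAt.continuousWithinAt
    (fun x _ ↦ hasDerivAt_angularDensity b θ x)
    (integrable_angularDensity_mul hθ b).neg.integrableOn
    (tendsto_angularDensity_atTop hθ.ne' b)
  rw [integral_neg] at h
  linarith

lemma integrable_angularDensity_mul_prod {θ₀ : ℝ} (hθ₀ : θ₀ ∈ Ioo (-(π / 2)) (π / 2)) (b : ℝ)
    {s : Set ℝ} (hs : MeasurableSet s) :
    Integrable (uncurry fun θ x ↦ angularDensity x b θ * (x - b * sin θ) / cos θ ^ 2)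
      ((volume.restrict (Ι 0 θ₀)).prod (volume.restrict s)) := by
  have hc₀ : 0 < cos θ₀ := cos_pos_of_mem_Ioo hθ₀
  have hθ₀π : |θ₀| ≤ π := by rw [abs_le]; constructor <;> linarith [hθ₀.1, hθ₀.2, pi_pos]
  have hbound : Integrable (fun z : ℝ × ℝ ↦ (1 : ℝ) *
      ((2 * π)⁻¹ / cos θ₀ ^ 2 * ((|z.2| + |b|) * exp (-(1 / 2) * z.2 ^ 2))))
      ((volume.restrict (Ι 0 θ₀)).prod (volume.restrict s)) :=
    (integrableOn_const (C := (1 : ℝ)) measure_Ioc_lt_top.ne).mul_prod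
      ((integrable_abs_add_mul_exp_neg_mul_sq one_half_pos |b|).const_mul _).restrict
  refine hbound.mono' (measurable_angularDensity_mul b).aestronglyMeasurable ?_
  rw [Measure.prod_restrict]
  refine ae_restrict_of_forall_mem (measurableSet_Ioc.prod hs) fun z hz ↦ ?_
  rw [Real.norm_eq_abs, one_mul]
  exact abs_angularDensity_mul_le hc₀
    (cos_le_cos_of_mem_uIcc_zero hθ₀π (uIoc_subset_uIcc hz.1)) b z.2

lemma intervalIntegral_angularDensity_mul {θ₀ : ℝ} (hθ₀ : θ₀ ∈ Ioo (-(π / 2)) (π / 2))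
    (b x : ℝ) :
    ∫ θ in 0..θ₀, angularDensity x b θ * (x - b * sin θ) / cos θ ^ 2 =
      φ x * stdNormalTail (tailThreshold b x θ₀) - φ x * stdNormalTail b := by
  have hcos : ∀ θ ∈ uIcc 0 θ₀, 0 < cos θ := fun θ hθ ↦ cos_pos_of_mem_uIcc_zero hθ₀ hθ
  have hcont : ContinuousOn (fun θ ↦ angularDensity x b θ * (x - b * sin θ) / cos θ ^ 2)
      (uIcc 0 θ₀) := by
    unfold angularDensity
    fun_prop (disch := intro θ hθ; have := hcos θ hθ; positivity)
  rw [intervalIntegral.integral_eq_sub_of_hasDerivAt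
    (fun θ hθ ↦ hasDerivAt_gaussianPDFReal_mul_stdNormalTail_tailThreshold (hcos θ hθ).ne' b x)
    hcont.intervalIntegrable]
  simp [tailThreshold]

lemma integral_Ioi_gaussianPDFReal_mul_stdNormalTail_tailThreshold {θ₀ : ℝ}
    (hθ₀ : θ₀ ∈ Ioo (-(π / 2)) (π / 2)) (a b : ℝ) :
    ∫ x in Ioi a, φ x * stdNormalTail (tailThreshold b x θ₀) =
      stdNormalTail a * stdNormalTail b + ∫ θ in 0..θ₀, angularDensity a b θ := by
  have hint : Integrable fun x ↦ φ x * stdNormalTail (tailThreshold b x θ₀) :=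
    (integrable_gaussianPDFReal 0 1).mul_bdd (c := 1)
      (antitone_stdNormalTail.measurable.comp
        (by unfold tailThreshold; fun_prop)).aestronglyMeasurable
      (ae_of_all _ fun x ↦ by
        rw [stdNormalTail, Real.norm_eq_abs, abs_of_nonneg measureReal_nonneg]
        exact measureReal_le_one)
  calc ∫ x in Ioi a, φ x * stdNormalTail (tailThreshold b x θ₀)
      = stdNormalTail a * stdNormalTail b + ∫ x in Ioi a,
          (φ x * stdNormalTail (tailThreshold b x θ₀) - φ x * stdNormalTail b) := by
        rw [integral_sub hint.integrableOn
          ((integrable_gaussianPDFReal 0 1).mul_const _).integrableOn, integral_mul_const,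
          ← stdNormalTail_eq_integral]
        ring
    _ = stdNormalTail a * stdNormalTail b + ∫ x in Ioi a,
          ∫ θ in 0..θ₀, angularDensity x b θ * (x - b * sin θ) / cos θ ^ 2 := by
        simp_rw [intervalIntegral_angularDensity_mul hθ₀]
    _ = stdNormalTail a * stdNormalTail b + ∫ θ in 0..θ₀,
          ∫ x in Ioi a, angularDensity x b θ * (x - b * sin θ) / cos θ ^ 2 := by
        rw [intervalIntegral_integral_swap
          (integrable_angularDensity_mul_prod hθ₀ b measurableSet_Ioi)]
    _ = stdNormalTail a * stdNormalTail b + ∫ θ in 0..θ₀, angularDensity a b θ := by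
        congr 1
        exact intervalIntegral.integral_congr fun θ hθ ↦
          integral_Ioi_angularDensity_mul (cos_pos_of_mem_uIcc_zero hθ₀ hθ) a b

/-- **Tail probability for bivariate normals.**  Let (X, Y) = (Z₁, ρZ₁ + √(1−ρ²)Z₂) where
Z₁, Z₂ are independent standard normals and ρ ∈ [0, 1).  Then for all a, b ∈ ℝ,
`P(X > a, Y > b) = P(X > a) P(Y > b)
  + (1/2π) ∫₀^{arcsin ρ} exp(−(a² + b² − 2ab sin θ)/(2 cos²θ)) dθ`. -/
theorem bivariate_normal_tail (ρ : ℝ) (hρ0 : 0 ≤ ρ) (hρ1 : ρ < 1) (a b : ℝ) :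
    (((gaussianReal 0 1).prod (gaussianReal 0 1))
        {z : ℝ × ℝ | a < z.1 ∧ b < ρ * z.1 + Real.sqrt (1 - ρ ^ 2) * z.2}).toReal =
      (((gaussianReal 0 1).prod (gaussianReal 0 1)) {z : ℝ × ℝ | a < z.1}).toReal *
        (((gaussianReal 0 1).prod (gaussianReal 0 1))
          {z : ℝ × ℝ | b < ρ * z.1 + Real.sqrt (1 - ρ ^ 2) * z.2}).toReal +
      (1 / (2 * π)) * ∫ θ in (0 : ℝ)..(Real.arcsin ρ),
        Real.exp (-(a ^ 2 + b ^ 2 - 2 * a * b * Real.sin θ) / (2 * Real.cos θ ^ 2)) := by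
  have hρ : ρ ∈ Ioo (-1) 1 := ⟨by linarith, hρ1⟩
  have hρ2 : 0 < 1 - ρ ^ 2 := by nlinarith
  have hc : 0 < √(1 - ρ ^ 2) := sqrt_pos.2 hρ2
  have hθ₀ : arcsin ρ ∈ Ioo (-(π / 2)) (π / 2) :=
    ⟨neg_pi_div_two_lt_arcsin.2 hρ.1, arcsin_lt_pi_div_two.2 hρ.2⟩
  have hthreshold (x : ℝ) : (b - ρ * x) / √(1 - ρ ^ 2) = tailThreshold b x (arcsin ρ) := by
    rw [tailThreshold, sin_arcsin hρ.1.le hρ.2.le, cos_arcsin, mul_comm]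
  simp only [← measureReal_def]
  rw [measureReal_prod_gaussianReal_fst_lt_linear_lt ρ hc,
    measureReal_prod_gaussianReal_fst_lt,
    measureReal_prod_gaussianReal_linear_lt (by rw [sq_sqrt hρ2.le]; ring)]
  simp_rw [hthreshold]
  rw [integral_Ioi_gaussianPDFReal_mul_stdNormalTail_tailThreshold hθ₀, one_div,
    ← intervalIntegral.integral_const_mul]
  rfl

end
end

section
/- Let w, z ∈ (0, ∞) satisfy w > z²/e². Then the function g : (0, ∞) → ℝ defined by g(x) = x·log(z/x) + (w/x)·log(z·x/w) (i.e., g(x) = x·log(z/x) + x*·log(z/x*) where x·x* = w) attains its maximum over (0, ∞) at the point x = √w; that is, g(x) ≤ g(√w) = 2√w·log(z/√w) for all x > 0. -/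
open Real

noncomputable section

lemma core_ineq (t : ℝ) :
    Real.exp t + Real.exp (-t) - 2 ≤ t * (Real.exp t - Real.exp (-t)) := by
  have h1 := Real.add_one_le_exp t
  have h2 := Real.add_one_le_exp (-t)
  have h3 : Real.exp t * Real.exp (-t) = 1 := by
    rw [← Real.exp_add]; simp
  have h4 := Real.exp_pos t
  have h5 := Real.exp_pos (-t)
  rcases le_or_gt 0 t with ht | ht
  · nlinarith [mul_nonneg ht h4.le, mul_nonneg ht h5.le,
      mul_nonneg (mul_nonneg ht h4.le) h4.le]
  · nlinarith [mul_nonneg (neg_nonneg.2 ht.le) h4.le,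
      mul_nonneg (neg_nonneg.2 ht.le) h5.le,
      mul_nonneg (mul_nonneg (neg_nonneg.2 ht.le) h5.le) h5.le]

/-- **Maximum of the symmetrized entropy term.**  Let w, z > 0 with w > z²/e².  The
function `g(x) = x log(z/x) + (w/x) log(z x / w)` (i.e. `x log(z/x) + x* log(z/x*)` with
`x x* = w`) attains its maximum over (0, ∞) at `x = √w`; its value there is
`2 √w log(z/√w)`. -/
theorem entropy_term_max (w z : ℝ) (hw : 0 < w) (hz : 0 < z)
    (h : z ^ 2 / Real.exp 2 < w) :
    (∀ x : ℝ, 0 < x →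
        x * Real.log (z / x) + (w / x) * Real.log (z * x / w) ≤
          2 * Real.sqrt w * Real.log (z / Real.sqrt w)) ∧
    Real.sqrt w * Real.log (z / Real.sqrt w)
        + (w / Real.sqrt w) * Real.log (z * Real.sqrt w / w) =
      2 * Real.sqrt w * Real.log (z / Real.sqrt w) := by
  set s := Real.sqrt w with hs_def
  have hs : 0 < s := Real.sqrt_pos.2 hw
  have hss : s * s = w := Real.mul_self_sqrt hw.le
  have hlogw : Real.log w = 2 * Real.log s := by
    rw [← hss, Real.log_mul hs.ne' hs.ne']; ring
  set L := Real.log (z / s) with hL_def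
  have hL_eq : L = Real.log z - Real.log s := Real.log_div hz.ne' hs.ne'
  -- L < 1
  have hL1 : L ≤ 1 := by
    have hz_lt : z < s * Real.exp 1 := by
      have he : Real.exp 2 = Real.exp 1 * Real.exp 1 := by
        rw [← Real.exp_add]; norm_num
      have hz2 : z ^ 2 < w * Real.exp 2 := by
        have := (div_lt_iff₀ (Real.exp_pos 2)).1 h
        linarith
      by_contra hc
      push_neg at hc
      have hm : s * Real.exp 1 * (s * Real.exp 1) ≤ z * z :=
        mul_le_mul hc hc (by positivity) hz.le
      nlinarith [hz2, hss, he]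
    have := Real.log_lt_log hz hz_lt
    rw [Real.log_mul hs.ne' (Real.exp_pos 1).ne', Real.log_exp] at this
    linarith [hL_eq]
  constructor
  · intro x hx
    set t := Real.log x - Real.log s with ht_def
    have hxt : x = s * Real.exp t := by
      rw [ht_def, Real.exp_sub, Real.exp_log hx, Real.exp_log hs]
      field_simp
    have hwx : w / x = s * Real.exp (-t) := by
      rw [hxt, ← hss, Real.exp_neg]
      field_simp
    have h1 : Real.log (z / x) = L - t := by
      rw [Real.log_div hz.ne' hx.ne', hL_eq]; ring
    have h2 : Real.log (z * x / w) = L + t := by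
      rw [Real.log_div (by positivity) hw.ne', Real.log_mul hz.ne' hx.ne',
        hlogw, hL_eq]; ring
    rw [h1, h2, hwx]
    rw [hxt]
    have hA : 0 ≤ Real.exp t + Real.exp (-t) - 2 := by
      nlinarith [Real.exp_pos t, Real.exp_pos (-t),
        (by rw [← Real.exp_add]; simp : Real.exp t * Real.exp (-t) = 1),
        sq_nonneg (Real.exp t - Real.exp (-t))]
    nlinarith [mul_nonneg hs.le (mul_nonneg (sub_nonneg.2 hL1) hA),
      mul_nonneg hs.le (sub_nonneg.2 (core_ineq t))]
  · have h1 : w / s = s := by rw [← hss]; field_simp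
    have h2 : z * s / w = z / s := by rw [← hss]; field_simp
    rw [h1, h2]; ring

end
end
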